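/- arXiv:2110.05429 — 4 statements merged into one kernel-verified Lean document; each statement's English description precedes it below -/
import Mathlib

section
/- The exponential mechanism with utility function u of L1-sensitivity Δ_u, which outputs s ∈ S with probability proportional to exp(ε·u(X,s)/(2Δ_u)), is ε-differentially private. -/
open Real

/-- Databases are multisets; neighbors differ by adding or removing one element. -/
def Neighbor {D : Type*} (X X' : Multiset D) : Prop :=
  (∃ x, X' = x ::ₘ X) ∨ (∃ x, X = x ::ₘ X')

/-- Probability that the exponential mechanism with utility `u`, sensitivity bound `Δ`
and privacy parameter `ε` outputs `s` on database `X`. -/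
noncomputable def expMechProb {D S : Type*} [Fintype S]
    (u : Multiset D → S → ℝ) (Δ ε : ℝ) (X : Multiset D) (s : S) : ℝ :=
  Real.exp (ε * u X s / (2 * Δ)) / ∑ t, Real.exp (ε * u X t / (2 * Δ))

/-- The exponential mechanism over a finite output set `S` with utility `u` of
`L1`-sensitivity at most `Δ` is `ε`-differentially private. -/
theorem expMech_isDP {D S : Type*} [Fintype S] [Nonempty S]
    (u : Multiset D → S → ℝ) (Δ ε : ℝ) (hΔ : 0 < Δ) (hε : 0 ≤ ε)
    (hsens : ∀ X X', Neighbor X X' → ∀ s : S, |u X s - u X' s| ≤ Δ)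
    (X X' : Multiset D) (hN : Neighbor X X') (s : S) :
    expMechProb u Δ ε X s ≤ Real.exp ε * expMechProb u Δ ε X' s := by
  have hN' : Neighbor X' X := by
    rcases hN with ⟨x, h⟩ | ⟨x, h⟩
    · exact Or.inr ⟨x, h⟩
    · exact Or.inl ⟨x, h⟩
  set a : S → ℝ := fun t => Real.exp (ε * u X t / (2 * Δ)) with ha
  set b : S → ℝ := fun t => Real.exp (ε * u X' t / (2 * Δ)) with hb
  have key : ∀ (Y Y' : Multiset D), Neighbor Y Y' → ∀ t : S,
      Real.exp (ε * u Y t / (2 * Δ)) ≤ Real.exp (ε / 2) * Real.exp (ε * u Y' t / (2 * Δ)) := by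
    intro Y Y' hYY t
    rw [← Real.exp_add]
    apply Real.exp_le_exp.mpr
    have h1 : u Y t - u Y' t ≤ Δ := (abs_le.mp (hsens Y Y' hYY t)).2
    have : ε * u Y t / (2 * Δ) - ε * u Y' t / (2 * Δ) = ε * (u Y t - u Y' t) / (2 * Δ) := by
      ring
    have h2Δ : (0:ℝ) < 2 * Δ := by linarith
    have h3 : ε * (u Y t - u Y' t) / (2 * Δ) ≤ ε / 2 := by
      rw [div_le_iff₀ h2Δ]
      nlinarith [mul_le_mul_of_nonneg_left h1 hε]
    linarith
  have hab : ∀ t, a t ≤ Real.exp (ε / 2) * b t := key X X' hN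
  have hba : ∀ t, b t ≤ Real.exp (ε / 2) * a t := key X' X hN'
  have hapos : ∀ t, 0 < a t := fun t => Real.exp_pos _
  have hbpos : ∀ t, 0 < b t := fun t => Real.exp_pos _
  have hsa : 0 < ∑ t, a t := Finset.sum_pos (fun t _ => hapos t) Finset.univ_nonempty
  have hsb : 0 < ∑ t, b t := Finset.sum_pos (fun t _ => hbpos t) Finset.univ_nonempty
  have hsum : ∑ t, b t ≤ Real.exp (ε / 2) * ∑ t, a t := by
    rw [Finset.mul_sum]
    exact Finset.sum_le_sum fun t _ => hba t
  show a s / ∑ t, a t ≤ Real.exp ε * (b s / ∑ t, b t)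
  rw [mul_div_assoc', div_le_div_iff₀ hsa hsb]
  have h2 : a s * ∑ t, b t ≤ (Real.exp (ε / 2) * b s) * (Real.exp (ε / 2) * ∑ t, a t) :=
    mul_le_mul (hab s) hsum hsb.le (by positivity)
  calc a s * ∑ t, b t ≤ (Real.exp (ε / 2) * b s) * (Real.exp (ε / 2) * ∑ t, a t) := h2
    _ = (Real.exp (ε / 2) * Real.exp (ε / 2)) * b s * ∑ t, a t := by ring
    _ = Real.exp ε * b s * ∑ t, a t := by rw [← Real.exp_add]; norm_num
end

section
/- Utility of the exponential mechanism: For the exponential mechanism over a finite set S with utility u of sensitivity Δ and privacy parameter ε, for any γ > 0, the probability that the output s satisfies u(X, s) ≤ Opt − γ is at most |S| · exp(−ε·γ/(2Δ)), where Opt = max_{s ∈ S} u(X, s). -/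
/-! Comparing the weight of an output with that of an optimal output `t` shows that each
output of utility at most `Opt - γ` has probability at most `exp (-εγ/(2Δ))`; a union bound
over the at most `|S|` such outputs finishes the proof. -/

open Real Finset

theorem Real.exp_div_sum_exp_le_exp_sub {ι : Type*} (s : Finset ι) (f : ι → ℝ) (i : ι)
    {j : ι} (hj : j ∈ s) : exp (f i) / ∑ k ∈ s, exp (f k) ≤ exp (f i - f j) := by
  rw [exp_sub]
  exact div_le_div_of_nonneg_left (exp_pos _).le (exp_pos _)
    (single_le_sum (fun k _ => (exp_pos (f k)).le) hj)

section ExpMech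

variable {D S : Type*} [Fintype S] (u : Multiset D → S → ℝ) {Δ ε : ℝ} (X : Multiset D)

theorem expMechProb_le_exp_sub (s t : S) :
    expMechProb u Δ ε X s ≤ exp (ε * u X s / (2 * Δ) - ε * u X t / (2 * Δ)) :=
  exp_div_sum_exp_le_exp_sub univ (fun k => ε * u X k / (2 * Δ)) s (mem_univ t)

theorem expMechProb_le_of_le_sub (hΔ : 0 ≤ Δ) (hε : 0 ≤ ε) {s t : S} {γ : ℝ}
    (h : u X s ≤ u X t - γ) : expMechProb u Δ ε X s ≤ exp (-(ε * γ) / (2 * Δ)) := by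
  refine (expMechProb_le_exp_sub u X s t).trans (exp_le_exp.2 ?_)
  have hc : 0 ≤ ε / (2 * Δ) := by positivity
  calc ε * u X s / (2 * Δ) - ε * u X t / (2 * Δ) = ε / (2 * Δ) * (u X s - u X t) := by ring
    _ ≤ ε / (2 * Δ) * -γ := mul_le_mul_of_nonneg_left (by linarith) hc
    _ = -(ε * γ) / (2 * Δ) := by ring

end ExpMech

theorem expMech_utility_general {D S : Type*} [Fintype S] [Nonempty S]
    (u : Multiset D → S → ℝ) (Δ ε : ℝ) (hΔ : 0 < Δ) (hε : 0 ≤ ε)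
    (X : Multiset D) (γ : ℝ) :
    ∑ s ∈ Finset.univ.filter
        (fun s => u X s ≤ (Finset.univ.sup' Finset.univ_nonempty (u X)) - γ),
      expMechProb u Δ ε X s
      ≤ (Fintype.card S : ℝ) * Real.exp (-(ε * γ) / (2 * Δ)) := by
  obtain ⟨t, -, ht⟩ := exists_mem_eq_sup' univ_nonempty (u X)
  calc _ ≤ #(univ.filter fun s => u X s ≤ univ.sup' univ_nonempty (u X) - γ)
          • exp (-(ε * γ) / (2 * Δ)) :=
        sum_le_card_nsmul _ _ _ fun s hs =>
          expMechProb_le_of_le_sub u X hΔ.le hε (ht ▸ (mem_filter.1 hs).2)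
    _ ≤ (Fintype.card S : ℝ) * exp (-(ε * γ) / (2 * Δ)) := by
        rw [nsmul_eq_mul]
        gcongr
        exact card_le_univ _

/-- Utility of the exponential mechanism: the probability that the output `s` has
`u(X,s) ≤ Opt − γ` is at most `|S| · exp(−εγ/(2Δ))`, where `Opt = max_{s} u(X,s)`. -/
theorem expMech_utility {D S : Type*} [Fintype S] [Nonempty S]
    (u : Multiset D → S → ℝ) (Δ ε : ℝ) (hΔ : 0 < Δ) (hε : 0 ≤ ε)
    (X : Multiset D) (γ : ℝ) (hγ : 0 < γ) :
    ∑ s ∈ Finset.univ.filter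
        (fun s => u X s ≤ (Finset.univ.sup' Finset.univ_nonempty (u X)) - γ),
      expMechProb u Δ ε X s
      ≤ (Fintype.card S : ℝ) * Real.exp (-(ε * γ) / (2 * Δ)) :=
  expMech_utility_general u Δ ε hΔ hε X γ
end

section
/- Conversion from pure DP to zCDP: If a randomized algorithm M satisfies ε-differential privacy, then M satisfies ρ-zCDP with ρ = ε²/2. -/
open Real

/-- `ε`-differential privacy for a randomized algorithm with discrete output. -/
def IsPureDP {D Y : Type*} (M : Multiset D → PMF Y) (ε : ℝ) : Prop :=
  ∀ X X', Neighbor X X' → ∀ S : Set Y,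
    (M X).toOuterMeasure S ≤ ENNReal.ofReal (Real.exp ε) * (M X').toOuterMeasure S

/-- The `α`-Rényi divergence between two discrete distributions. -/
noncomputable def renyiDiv {Y : Type*} (P Q : PMF Y) (α : ℝ) : ℝ :=
  (α - 1)⁻¹ * Real.log (∑' y, (P y).toReal ^ α * (Q y).toReal ^ (1 - α))

/-- `ρ`-zero-concentrated differential privacy. -/
def IszCDP {D Y : Type*} (M : Multiset D → PMF Y) (ρ : ℝ) : Prop :=
  ∀ X X', Neighbor X X' → ∀ α : ℝ, 1 < α → renyiDiv (M X) (M X') α ≤ ρ * α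

/-!
Write `p`, `q` for the two output distributions. Pure DP confines the likelihood ratio `p y / q y`
to `[e^{-ε}, e^ε]`, so by convexity of `r ↦ r ^ α` each term `q (p/q) ^ α` of the Rényi sum lies
below the secant of `r ^ α` over that interval; summing, the Rényi sum is at most the secant's value
at `r = 1`. That value equals `cosh ((2α - 1) ε / 2) / cosh (ε / 2)`, and since
`u ↦ cosh u * exp (-u ^ 2 / 2)` is antitone on `[0, ∞)` it is at most `exp (α (α - 1) ε ^ 2 / 2)`.
-/

open Set

lemma sinh_le_mul_cosh {x : ℝ} (hx : 0 ≤ x) : sinh x ≤ x * cosh x := by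
  have hmono : MonotoneOn (fun x => x * cosh x - sinh x) (Ici 0) := by
    refine monotoneOn_of_hasDerivWithinAt_nonneg (f' := fun x => x * sinh x) (convex_Ici 0)
      (by fun_prop) (fun y _ => ?_) (fun y hy => ?_)
    · exact ((((hasDerivAt_id' y).fun_mul (hasDerivAt_cosh y)).fun_sub
        (hasDerivAt_sinh y)).congr_deriv (by ring)).hasDerivWithinAt
    · rw [interior_Ici, mem_Ioi] at hy
      exact mul_nonneg hy.le (sinh_nonneg_iff.2 hy.le)
  simpa using hmono self_mem_Ici hx hx

lemma antitoneOn_cosh_mul_exp_neg_sq_half :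
    AntitoneOn (fun u => cosh u * exp (-(u ^ 2 / 2))) (Ici 0) := by
  refine antitoneOn_of_hasDerivWithinAt_nonpos
    (f' := fun u => (sinh u - u * cosh u) * exp (-(u ^ 2 / 2))) (convex_Ici 0)
    (by fun_prop) (fun u _ => ?_) (fun u hu => ?_)
  · exact (((hasDerivAt_cosh u).fun_mul (((hasDerivAt_pow 2 u).div_const 2).fun_neg.exp)).congr_deriv
      (by push_cast; ring)).hasDerivWithinAt
  · rw [interior_Ici, mem_Ioi] at hu
    exact mul_nonpos_of_nonpos_of_nonneg (sub_nonpos.2 (sinh_le_mul_cosh hu.le)) (exp_pos _).le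

lemma cosh_le_cosh_mul_exp {u v : ℝ} (hu : 0 ≤ u) (huv : u ≤ v) :
    cosh v ≤ cosh u * exp ((v ^ 2 - u ^ 2) / 2) := by
  have h := antitoneOn_cosh_mul_exp_neg_sq_half hu (hu.trans huv) huv
  have hsplit : exp ((v ^ 2 - u ^ 2) / 2) = exp (-(u ^ 2 / 2)) * exp (v ^ 2 / 2) := by
    rw [← exp_add]; ring_nf
  rw [hsplit, ← mul_assoc, ← div_le_iff₀ (exp_pos _), div_eq_mul_inv, ← exp_neg]
  exact h

lemma ConvexOn.le_secant {s : Set ℝ} {f : ℝ → ℝ} (hf : ConvexOn ℝ s f) {a b x : ℝ} (ha : a ∈ s)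
    (hb : b ∈ s) (hab : a < b) (hx : x ∈ Icc a b) :
    f x ≤ ((b - x) * f a + (x - a) * f b) / (b - a) := by
  rw [le_div_iff₀ (sub_pos.2 hab), mul_comm]
  rcases hx.1.eq_or_lt with rfl | hax
  · linarith
  rcases hx.2.eq_or_lt with rfl | hxb
  · linarith
  exact hf.secant_mono_aux1 ha hb hax hxb

lemma rpow_mul_rpow_one_sub_le_secant {α a b p q : ℝ} (hα : 1 < α) (ha : 0 ≤ a) (hab : a < b)
    (hq : 0 ≤ q) (hap : a * q ≤ p) (hpb : p ≤ b * q) :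
    p ^ α * q ^ (1 - α) ≤ ((b * q - p) * a ^ α + (p - a * q) * b ^ α) / (b - a) := by
  rcases hq.eq_or_lt with rfl | hq
  · obtain rfl : p = 0 := by linarith
    simp [zero_rpow (by linarith : α ≠ 0)]
  have hpq : p / q ∈ Icc a b := ⟨(le_div_iff₀ hq).2 hap, (div_le_iff₀ hq).2 hpb⟩
  have h := (convexOn_rpow hα.le).le_secant ha (ha.trans hab.le) hab hpq
  have hperspective : p ^ α * q ^ (1 - α) = q * (p / q) ^ α := by
    rw [div_rpow ((mul_nonneg ha hq.le).trans hap) hq.le, rpow_sub hq, rpow_one]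
    field_simp
  rw [hperspective]
  calc q * (p / q) ^ α ≤ q * (((b - p / q) * a ^ α + (p / q - a) * b ^ α) / (b - a)) :=
        mul_le_mul_of_nonneg_left h hq.le
    _ = ((b * q - p) * a ^ α + (p - a * q) * b ^ α) / (b - a) := by field_simp

lemma tsum_rpow_mul_rpow_one_sub_le_secant {Y : Type*} {p q : Y → ℝ} {α a b : ℝ} (hα : 1 < α)
    (ha : 0 ≤ a) (hab : a < b) (hq : ∀ y, 0 ≤ q y) (hap : ∀ y, a * q y ≤ p y)
    (hpb : ∀ y, p y ≤ b * q y) (hp1 : HasSum p 1) (hq1 : HasSum q 1) :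
    ∑' y, p y ^ α * q y ^ (1 - α) ≤ ((b - 1) * a ^ α + (1 - a) * b ^ α) / (b - a) := by
  have hbound := fun y => rpow_mul_rpow_one_sub_le_secant hα ha hab (hq y) (hap y) (hpb y)
  have hsecant : HasSum (fun y => ((b * q y - p y) * a ^ α + (p y - a * q y) * b ^ α) / (b - a))
      (((b - 1) * a ^ α + (1 - a) * b ^ α) / (b - a)) := by
    simpa only [mul_one] using ((((hq1.mul_left b).sub hp1).mul_right (a ^ α)).add
      ((hp1.sub (hq1.mul_left a)).mul_right (b ^ α))).div_const (b - a)
  have hnonneg : ∀ y, 0 ≤ p y ^ α * q y ^ (1 - α) := fun y =>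
    mul_nonneg (rpow_nonneg ((mul_nonneg ha (hq y)).trans (hap y)) _) (rpow_nonneg (hq y) _)
  exact hasSum_le hbound (Summable.of_nonneg_of_le hnonneg hbound hsecant.summable).hasSum hsecant

lemma secant_exp_neg_exp_eq {ε α : ℝ} (hε : 0 < ε) :
    ((exp ε - 1) * exp (-ε) ^ α + (1 - exp (-ε)) * exp ε ^ α) / (exp ε - exp (-ε))
      = cosh ((2 * α - 1) * ε / 2) / cosh (ε / 2) := by
  have hε2 : exp ε = exp (ε / 2) ^ 2 := by rw [← exp_nat_mul]; ring_nf
  have hαε : exp ε ^ α = exp ((2 * α - 1) * ε / 2) * exp (ε / 2) := by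
    rw [← exp_mul, ← exp_add]; ring_nf
  have hT : 1 < exp (ε / 2) := one_lt_exp_iff.2 (by linarith)
  rw [cosh_eq, cosh_eq, exp_neg, exp_neg, exp_neg, inv_rpow (exp_pos _).le, hαε, hε2]
  generalize exp (ε / 2) = T at hT ⊢
  have hS : 0 < exp ((2 * α - 1) * ε / 2) := exp_pos _
  generalize exp ((2 * α - 1) * ε / 2) = S at hS ⊢
  have : T ^ 4 - 1 ≠ 0 := (sub_pos.2 (one_lt_pow₀ hT (by norm_num))).ne'
  field_simp
  ring

lemma tsum_rpow_mul_rpow_one_sub_le_exp {Y : Type*} {p q : Y → ℝ} {ε α : ℝ} (hε : 0 ≤ ε)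
    (hα : 1 < α) (hq : ∀ y, 0 ≤ q y) (hpq : ∀ y, p y ≤ exp ε * q y)
    (hqp : ∀ y, q y ≤ exp ε * p y) (hp1 : HasSum p 1) (hq1 : HasSum q 1) :
    ∑' y, p y ^ α * q y ^ (1 - α) ≤ exp (α * (α - 1) * ε ^ 2 / 2) := by
  rcases hε.eq_or_lt with rfl | hε_pos
  · have hpq_eq : ∀ y, p y = q y := fun y =>
      le_antisymm (by simpa using hpq y) (by simpa using hqp y)
    simp_rw [hpq_eq, ← rpow_add' (hq _) (by norm_num : α + (1 - α) ≠ 0), add_sub_cancel, rpow_one,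
      hq1.tsum_eq]
    simp
  have hap : ∀ y, exp (-ε) * q y ≤ p y := fun y => by
    rw [exp_neg, inv_mul_le_iff₀ (exp_pos ε)]; exact hqp y
  calc ∑' y, p y ^ α * q y ^ (1 - α)
      ≤ ((exp ε - 1) * exp (-ε) ^ α + (1 - exp (-ε)) * exp ε ^ α) / (exp ε - exp (-ε)) :=
        tsum_rpow_mul_rpow_one_sub_le_secant hα (exp_pos _).le (exp_lt_exp.2 (neg_lt_self hε_pos))
          hq hap hpq hp1 hq1
    _ = cosh ((2 * α - 1) * ε / 2) / cosh (ε / 2) := secant_exp_neg_exp_eq hε_pos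
    _ ≤ exp (α * (α - 1) * ε ^ 2 / 2) := by
        have hexp : (((2 * α - 1) * ε / 2) ^ 2 - (ε / 2) ^ 2) / 2 = α * (α - 1) * ε ^ 2 / 2 := by
          ring
        rw [div_le_iff₀ (cosh_pos _), ← hexp, mul_comm (exp _)]
        exact cosh_le_cosh_mul_exp (by linarith) (by nlinarith)

lemma PMF.hasSum_toReal_one {Y : Type*} (P : PMF Y) : HasSum (fun y => (P y).toReal) 1 := by
  have h := ENNReal.hasSum_toReal (P.tsum_coe.symm ▸ ENNReal.one_ne_top)
  rwa [← ENNReal.tsum_toReal_eq P.apply_ne_top, P.tsum_coe, ENNReal.toReal_one] at h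

lemma Neighbor.symm {D : Type*} {X X' : Multiset D} (h : Neighbor X X') : Neighbor X' X :=
  Or.symm h

lemma IsPureDP.toReal_apply_le {D Y : Type*} {M : Multiset D → PMF Y} {ε : ℝ} (hDP : IsPureDP M ε)
    {X X' : Multiset D} (hN : Neighbor X X') (y : Y) :
    (M X y).toReal ≤ exp ε * (M X' y).toReal := by
  have h := hDP X X' hN {y}
  rw [PMF.toOuterMeasure_apply_singleton, PMF.toOuterMeasure_apply_singleton] at h
  simpa [ENNReal.toReal_mul, (exp_pos ε).le] using
    ENNReal.toReal_mono (ENNReal.mul_ne_top ENNReal.ofReal_ne_top (PMF.apply_ne_top _ _)) h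

lemma renyiDiv_le_of_toReal_le_exp_mul {Y : Type*} {P Q : PMF Y} {ε α : ℝ} (hε : 0 ≤ ε)
    (hα : 1 < α) (hPQ : ∀ y, (P y).toReal ≤ exp ε * (Q y).toReal)
    (hQP : ∀ y, (Q y).toReal ≤ exp ε * (P y).toReal) :
    renyiDiv P Q α ≤ ε ^ 2 / 2 * α := by
  set S := ∑' y, (P y).toReal ^ α * (Q y).toReal ^ (1 - α)
  have hα1 : 0 < α - 1 := by linarith
  have hS : S ≤ exp (α * (α - 1) * ε ^ 2 / 2) :=
    tsum_rpow_mul_rpow_one_sub_le_exp hε hα (fun _ => ENNReal.toReal_nonneg) hPQ hQP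
      P.hasSum_toReal_one Q.hasSum_toReal_one
  have hS_nonneg : 0 ≤ S := tsum_nonneg fun _ =>
    mul_nonneg (rpow_nonneg ENNReal.toReal_nonneg _) (rpow_nonneg ENNReal.toReal_nonneg _)
  have hlog : log S ≤ α * (α - 1) * ε ^ 2 / 2 := by
    rcases hS_nonneg.eq_or_lt with hS0 | hS0
    · rw [← hS0, log_zero]
      positivity
    · exact (log_le_iff_le_exp hS0).2 hS
  calc renyiDiv P Q α = (α - 1)⁻¹ * log S := rfl
    _ ≤ (α - 1)⁻¹ * (α * (α - 1) * ε ^ 2 / 2) :=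
      mul_le_mul_of_nonneg_left hlog (inv_nonneg.2 hα1.le)
    _ = ε ^ 2 / 2 * α := by field_simp [hα1.ne']

/-- Conversion from pure DP to zCDP: an `ε`-DP algorithm is `(ε²/2)`-zCDP. -/
theorem pureDP_to_zCDP {D Y : Type*} (M : Multiset D → PMF Y) (ε : ℝ) (hε : 0 ≤ ε)
    (hDP : IsPureDP M ε) : IszCDP M (ε ^ 2 / 2) := fun _ _ hN _ hα =>
  renyiDiv_le_of_toReal_le_exp_mul hε hα (hDP.toReal_apply_le hN) (hDP.toReal_apply_le hN.symm)
end

section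
/- The single-quantile utility function has sensitivity 1: For u(X, w) = −| |{x ∈ X : x < w}| − ⌊q·|X|⌋ |, if X' is obtained from X by adding or removing one element, then for every w ∈ (a,b), |u(X,w) − u(X',w)| ≤ 1. -/
/-- Datasets are finite sets of reals; neighbors differ by adding or removing one point. -/
def FNeighbor (X X' : Finset ℝ) : Prop :=
  (∃ x ∉ X, X' = insert x X) ∨ (∃ x ∉ X', X = insert x X')

/-- The single-quantile utility function `u(X, w) = −| |{x ∈ X : x < w}| − ⌊q·|X|⌋ |`. -/
noncomputable def quantileUtility (q : ℝ) (X : Finset ℝ) (w : ℝ) : ℝ :=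
  -|((X.filter (fun x => x < w)).card : ℝ) - (⌊q * X.card⌋ : ℤ)|

lemma quantileUtility_insert (q : ℝ) (hq : q ∈ Set.Icc (0 : ℝ) 1)
    (X : Finset ℝ) (x : ℝ) (hx : x ∉ X) (w : ℝ) :
    |quantileUtility q X w - quantileUtility q (insert x X) w| ≤ 1 := by
  obtain ⟨hq0, hq1⟩ := hq
  set c : ℕ := (X.filter (fun y => y < w)).card with hc
  set c' : ℕ := ((insert x X).filter (fun y => y < w)).card with hc'
  have hcc : c ≤ c' ∧ c' ≤ c + 1 := by
    rw [hc, hc', Finset.filter_insert]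
    by_cases hxw : x < w
    · rw [if_pos hxw, Finset.card_insert_of_notMem (fun hm => hx (Finset.mem_filter.1 hm).1)]
      omega
    · rw [if_neg hxw]; omega
  have hcard : ((insert x X).card : ℝ) = X.card + 1 := by
    rw [Finset.card_insert_of_notMem hx]; push_cast; ring
  set f : ℤ := ⌊q * X.card⌋ with hf
  set f' : ℤ := ⌊q * (insert x X).card⌋ with hf'
  have hff : f ≤ f' ∧ f' ≤ f + 1 := by
    constructor
    · apply Int.floor_le_floor
      rw [hcard]; nlinarith
    · rw [hf', hcard]
      calc ⌊q * ((X.card : ℝ) + 1)⌋ ≤ ⌊q * X.card + 1⌋ := by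
            apply Int.floor_le_floor; nlinarith
        _ = f + 1 := by rw [Int.floor_add_one]
  have key : |((c : ℝ) - f) - ((c' : ℝ) - f')| ≤ 1 := by
    obtain ⟨h1, h2⟩ := hcc
    obtain ⟨h3, h4⟩ := hff
    have : (c : ℝ) ≤ c' := by exact_mod_cast h1
    have : (c' : ℝ) ≤ c + 1 := by exact_mod_cast h2
    have : (f : ℝ) ≤ f' := by exact_mod_cast h3
    have : (f' : ℝ) ≤ f + 1 := by exact_mod_cast h4
    rw [abs_le]; constructor <;> linarith
  calc |quantileUtility q X w - quantileUtility q (insert x X) w|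
      = |(|((c' : ℝ) - f')| - |((c : ℝ) - f)|)| := by
        rw [quantileUtility, quantileUtility, ← hc, ← hc', ← hf, ← hf']
        rw [neg_sub_neg]
    _ ≤ |((c' : ℝ) - f') - ((c : ℝ) - f)| := abs_abs_sub_abs_le_abs_sub _ _
    _ ≤ 1 := by rw [abs_sub_comm]; exact key

/-- The single-quantile utility function has sensitivity 1: if `X'` is obtained from
`X` by adding or removing one element, then for every `w`,
`|u(X,w) − u(X',w)| ≤ 1`. -/
theorem quantileUtility_sensitivity (q : ℝ) (hq : q ∈ Set.Icc (0 : ℝ) 1)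
    (X X' : Finset ℝ) (h : FNeighbor X X') (w : ℝ) :
    |quantileUtility q X w - quantileUtility q X' w| ≤ 1 := by
  rcases h with ⟨x, hx, rfl⟩ | ⟨x, hx, rfl⟩
  · exact quantileUtility_insert q hq X x hx w
  · rw [abs_sub_comm]; exact quantileUtility_insert q hq X' x hx w
end
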